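/- For every α ≥ 1 and integer p ≥ 1, there exists a constant C < ∞ (depending only on α and p) such that the following holds. Let A^(1) ∈ ℝ^{n₀×n₁}, …, A^(p) ∈ ℝ^{n_{p−1}×n_p} be independent families of i.i.d. centered random variables with unit variance and a finite moment of order 2α, and let P := A^(1) ⋯ A^(p) ∈ ℝ^{n₀×n_p}. Then for every j ∈ {1,…,n_p}, E[|Σ_{i=1}^{n₀} P_{ij}|^{2α}] ≤ C E[|A^(1)_{11}|^{2α}] ⋯ E[|A^(p)_{11}|^{2α}] (n₀ n₁ ⋯ n_{p−1})^α. -/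

import Mathlib

open MeasureTheory ProbabilityTheory Finset

/-- The product of the `p+1` matrices `A 0, A 1, ..., A p`, where `A q` is viewed as a matrix of
size `n q × n (q+1)`: `matProd n A p i k` is the `(i, k)` entry of this product. -/
noncomputable def matProd (n : ℕ → ℕ) (A : ℕ → ℕ → ℕ → ℝ) : ℕ → ℕ → ℕ → ℝ
  | 0 => A 0
  | p + 1 => fun i k => ∑ j ∈ Finset.range (n (p + 1)), matProd n A p i j * A (p + 1) j k

/-!
Write the column sums of `A⁽¹⁾ ⋯ A⁽ᵏ⁺¹⁾` as `∑ₗ Tₗ Xₗ`, where the `Tₗ` are the column sums of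
`A⁽¹⁾ ⋯ A⁽ᵏ⁾` and the `Xₗ` are entries of one column of `A⁽ᵏ⁺¹⁾`, independent of the `Tₗ`.
Conditionally on `T = t` this is a weighted sum of independent centred variables, for which a
Marcinkiewicz–Zygmund inequality `E|∑ tₗ Xₗ|^r ≤ K m (∑ tₗ²)^(r/2)` holds (`m` bounding the
`r`-th moments); with the power-mean inequality `(∑ₗ tₗ²)^(r/2) ≤ nₖ^(r/2-1) ∑ₗ |tₗ|^r` one
gains the factor `K m nₖ^(r/2)` per matrix, and induction over the `p` factors gives `C = Kᵖ`.

The Marcinkiewicz–Zygmund inequality is proved by induction on the number of summands, from the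
pointwise bound `|s + x|^r ≤ |s|^r + r |s|^(r-2) s x + c (|s|^(r-2) x² + |x|^r)`: for `x`
independent of `s` and centred the linear term has mean zero, and Lyapunov's inequality
`E|S|^(r-2) ≤ (E|S|^r)^((r-2)/r)` closes the induction.
-/

noncomputable def taylorConst (r : ℝ) : ℝ := (2 * r) ^ r + r ^ 2

lemma one_le_taylorConst {r : ℝ} (hr : 1 ≤ r) : 1 ≤ taylorConst r := by
  have : (1 : ℝ) ≤ (2 * r) ^ r := Real.one_le_rpow (by linarith) (by linarith)
  unfold taylorConst
  nlinarith

lemma abs_one_add_rpow_le {r : ℝ} (hr : 1 ≤ r) (x : ℝ) :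
    |1 + x| ^ r ≤ 1 + r * x + taylorConst r * (x ^ 2 + |x| ^ r) := by
  have hr0 : 0 ≤ r := by linarith
  have h2r : 0 ≤ (2 * r) ^ r := by positivity
  have hxr : 0 ≤ |x| ^ r := by positivity
  rcases le_or_gt (r * |x|) 1 with hsmall | hlarge
  · -- `|1 + x|^r ≤ exp (r x) ≤ 1 + r x + (r x)^2`
    have hrx : |r * x| ≤ 1 := by rwa [abs_mul, abs_of_nonneg hr0]
    have hx1 : 0 ≤ 1 + x := by
      have : |x| ≤ 1 := le_trans (le_mul_of_one_le_left (abs_nonneg x) hr) hsmall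
      linarith [neg_abs_le x]
    have hexp : |1 + x| ^ r ≤ Real.exp (r * x) := by
      rw [abs_of_nonneg hx1, mul_comm, Real.exp_mul]
      exact Real.rpow_le_rpow hx1 (by linarith [Real.add_one_le_exp x]) hr0
    have htaylor := (abs_le.mp (Real.abs_exp_sub_one_sub_id_le hrx)).2
    unfold taylorConst
    nlinarith [mul_nonneg h2r hxr, mul_nonneg h2r (sq_nonneg x), mul_nonneg (sq_nonneg r) hxr]
  · -- `|1 + x| ≤ 2 r |x|`, and `1 + r x + (r x)^2 > 0`
    have hx : |1 + x| ≤ 2 * r * |x| := by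
      have := abs_add_le 1 x
      rw [abs_one] at this
      nlinarith
    have hpow : |1 + x| ^ r ≤ (2 * r) ^ r * |x| ^ r := by
      rw [← Real.mul_rpow (by positivity) (abs_nonneg x)]
      exact Real.rpow_le_rpow (abs_nonneg _) (by linarith) hr0
    unfold taylorConst
    nlinarith [sq_nonneg (r * x + 1 / 2), mul_nonneg h2r (sq_nonneg x),
      mul_nonneg (sq_nonneg r) hxr]

lemma abs_add_rpow_le {r : ℝ} (hr : 1 ≤ r) (s x : ℝ) :
    |s + x| ^ r ≤ |s| ^ r + r * (|s| ^ (r - 2) * s * x)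
      + taylorConst r * (|s| ^ (r - 2) * x ^ 2 + |x| ^ r) := by
  rcases eq_or_ne s 0 with rfl | hs
  · rw [zero_add, abs_zero, Real.zero_rpow (by linarith)]
    have : 0 ≤ |x| ^ r := by positivity
    have : 0 ≤ (0 : ℝ) ^ (r - 2) * x ^ 2 := by positivity
    nlinarith [one_le_taylorConst hr]
  have hs' : 0 < |s| := abs_pos.mpr hs
  have hsr : |s| ^ r = |s| ^ (r - 2) * s ^ 2 := by
    rw [Real.rpow_sub hs', Real.rpow_two, sq_abs, div_mul_cancel₀ _ (by positivity)]
  have key := mul_le_mul_of_nonneg_left (abs_one_add_rpow_le hr (x / s))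
    (by positivity : 0 ≤ |s| ^ r)
  have h1 : |s| ^ r * |1 + x / s| ^ r = |s + x| ^ r := by
    rw [← Real.mul_rpow hs'.le (abs_nonneg _), ← abs_mul, mul_add, mul_one, mul_div_cancel₀ _ hs]
  have h2 : |s| ^ r * |x / s| ^ r = |x| ^ r := by
    rw [← Real.mul_rpow hs'.le (abs_nonneg _), ← abs_mul, mul_div_cancel₀ _ hs]
  calc |s + x| ^ r = |s| ^ r * |1 + x / s| ^ r := h1.symm
    _ ≤ |s| ^ r * (1 + r * (x / s) + taylorConst r * ((x / s) ^ 2 + |x / s| ^ r)) := key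
    _ = |s| ^ r + r * (|s| ^ r * (x / s))
        + taylorConst r * (|s| ^ r * (x / s) ^ 2 + |s| ^ r * |x / s| ^ r) := by ring
    _ = _ := by
      rw [h2, hsr]
      field_simp

lemma sq_rpow_div_two (t r : ℝ) : (t ^ 2) ^ (r / 2) = |t| ^ r := by
  rw [← sq_abs, ← Real.rpow_natCast, ← Real.rpow_mul (abs_nonneg t)]
  norm_num [mul_div_cancel₀]

lemma rpow_sub_one_mul_self {x p : ℝ} (hx : 0 ≤ x) (hp : p ≠ 0) : x ^ (p - 1) * x = x ^ p := by
  rw [← Real.rpow_add_one' hx (by simpa using hp), sub_add_cancel]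

lemma rpow_add_mean_le_add_rpow {p σ u : ℝ} (hp : 1 ≤ p) (hσ : 0 ≤ σ) (hu : 0 ≤ u) :
    σ ^ p + (σ ^ (p - 1) * u + u ^ p) / 2 ≤ (σ + u) ^ p := by
  have hsuper : σ ^ p + u ^ p ≤ (σ + u) ^ p := Real.add_rpow_le_rpow_add hσ hu hp
  have hlin : σ ^ p + σ ^ (p - 1) * u ≤ (σ + u) ^ p := by
    rw [← rpow_sub_one_mul_self hσ (by linarith),
      ← rpow_sub_one_mul_self (by linarith : 0 ≤ σ + u) (by linarith), ← mul_add]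
    gcongr
    linarith
  linarith

/-- The inductive step of the Marcinkiewicz–Zygmund bound, with `a = E|S|^r` for the partial sum
`S`, `σ` the sum of its squared weights and `u` the squared weight of the new summand. -/
lemma add_mul_le_rpow_mul_add_rpow {r c m σ u a : ℝ} (hr : 2 ≤ r) (hc : 1 ≤ 2 * c)
    (hm : 1 ≤ m) (hσ : 0 ≤ σ) (hu : 0 ≤ u) (ha0 : 0 ≤ a)
    (ha : a ≤ (2 * c) ^ (r / 2) * m * σ ^ (r / 2)) :
    a + c * (a ^ ((r - 2) / r) * u + m * u ^ (r / 2))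
      ≤ (2 * c) ^ (r / 2) * m * (σ + u) ^ (r / 2) := by
  set p := r / 2 with hp
  set K := (2 * c) ^ p
  have hp1 : 1 ≤ p := by linarith
  have hc0 : 0 ≤ c := by linarith
  have hθ : (r - 2) / r = (p - 1) / p := by rw [hp]; field_simp
  have hcK : c * (2 * c) ^ (p - 1) = K / 2 := by
    linarith [rpow_sub_one_mul_self (by linarith : 0 ≤ 2 * c) (by linarith : p ≠ 0)]
  have hc_le : c ≤ K / 2 := by
    rw [← hcK]
    exact le_mul_of_one_le_right hc0 (Real.one_le_rpow hc (by linarith))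
  have haθ : a ^ ((p - 1) / p) ≤ (2 * c) ^ (p - 1) * m * σ ^ (p - 1) := by
    have hθ0 : 0 ≤ (p - 1) / p := div_nonneg (by linarith) (by linarith)
    calc a ^ ((p - 1) / p) ≤ (K * m * σ ^ p) ^ ((p - 1) / p) := Real.rpow_le_rpow ha0 ha hθ0
      _ = (2 * c) ^ (p - 1) * m ^ ((p - 1) / p) * σ ^ (p - 1) := by
        rw [Real.mul_rpow (by positivity) (by positivity), Real.mul_rpow (by positivity)
          (by linarith), ← Real.rpow_mul hσ, ← Real.rpow_mul (by linarith),
          mul_div_cancel₀ _ (by linarith)]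
      _ ≤ (2 * c) ^ (p - 1) * m * σ ^ (p - 1) := by
        gcongr
        simpa using Real.rpow_le_rpow_of_exponent_le hm
          ((div_le_one (by linarith)).mpr (by linarith) : (p - 1) / p ≤ 1)
  rw [hθ]
  calc a + c * (a ^ ((p - 1) / p) * u + m * u ^ p)
      = a + c * (a ^ ((p - 1) / p) * u) + c * (m * u ^ p) := by ring
    _ ≤ K * m * σ ^ p + c * ((2 * c) ^ (p - 1) * m * σ ^ (p - 1) * u) + K / 2 * (m * u ^ p) := by
        gcongr
    _ = K * m * (σ ^ p + (σ ^ (p - 1) * u + u ^ p) / 2) := by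
        linear_combination (m * σ ^ (p - 1) * u) * hcK
    _ ≤ K * m * (σ + u) ^ p := by gcongr; exact rpow_add_mean_le_add_rpow hp1 hσ hu

section Moments

variable {Ω : Type*} [MeasurableSpace Ω] {μ : Measure Ω}

lemma integrable_abs_rpow_of_le [IsFiniteMeasure μ] {f : Ω → ℝ} (hf : Measurable f) {p q : ℝ}
    (hp : 0 ≤ p) (hpq : p ≤ q) (hq : Integrable (fun ω => |f ω| ^ q) μ) :
    Integrable (fun ω => |f ω| ^ p) μ := by
  refine ((integrable_const 1).add hq).mono' (by fun_prop) (ae_of_all _ fun ω => ?_)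
  rw [Real.norm_of_nonneg (by positivity), Pi.add_apply]
  rcases le_total |f ω| 1 with h | h
  · linarith [Real.rpow_le_one (abs_nonneg (f ω)) h hp, Real.rpow_nonneg (abs_nonneg (f ω)) q]
  · linarith [Real.rpow_le_rpow_of_exponent_le h hpq]

lemma integrable_abs_sum_rpow {ι : Type*} (s : Finset ι) {f : ι → Ω → ℝ}
    (hf : ∀ i ∈ s, Measurable (f i)) {r : ℝ} (hr : 1 ≤ r)
    (hfi : ∀ i ∈ s, Integrable (fun ω => |f i ω| ^ r) μ) :
    Integrable (fun ω => |∑ i ∈ s, f i ω| ^ r) μ := by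
  have hmeas : Measurable fun ω => ∑ i ∈ s, f i ω := Finset.measurable_fun_sum s hf
  refine ((integrable_finsetSum s hfi).const_mul ((#s : ℝ) ^ (r - 1))).mono'
    (hmeas.abs.pow_const r).aestronglyMeasurable
    (ae_of_all _ fun ω => ?_)
  rw [Real.norm_of_nonneg (by positivity)]
  calc |∑ i ∈ s, f i ω| ^ r ≤ (∑ i ∈ s, |f i ω|) ^ r :=
        Real.rpow_le_rpow (abs_nonneg _) (Finset.abs_sum_le_sum_abs _ _) (by linarith)
    _ ≤ _ := Real.rpow_sum_le_const_mul_sum_rpow s (fun i => f i ω) hr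

lemma integrable_abs_mul_rpow (t : ℝ) {X : Ω → ℝ} {r : ℝ}
    (hXr : Integrable (fun ω => |X ω| ^ r) μ) : Integrable (fun ω => |t * X ω| ^ r) μ := by
  simpa only [abs_mul, Real.mul_rpow (abs_nonneg t) (abs_nonneg _)] using hXr.const_mul (|t| ^ r)

lemma integrable_abs_sum_mul_rpow {ι : Type*} (s : Finset ι) {T X : ι → Ω → ℝ}
    (hT : ∀ i, Measurable (T i)) (hX : ∀ i, Measurable (X i))
    (hTX : IndepFun (fun ω i => T i ω) (fun ω i => X i ω) μ) {r : ℝ} (hr : 1 ≤ r)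
    (hTr : ∀ i ∈ s, Integrable (fun ω => |T i ω| ^ r) μ)
    (hXr : ∀ i, Integrable (fun ω => |X i ω| ^ r) μ) :
    Integrable (fun ω => |∑ i ∈ s, T i ω * X i ω| ^ r) μ := by
  refine integrable_abs_sum_rpow s (fun i _ => (hT i).mul (hX i)) hr fun i hi => ?_
  have hind := hTX.comp (φ := fun u : ι → ℝ => |u i| ^ r) (ψ := fun v : ι → ℝ => |v i| ^ r)
    (by fun_prop) (by fun_prop)
  refine (hind.integrable_mul (hTr i hi) (hXr i)).congr (ae_of_all _ fun ω => ?_)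
  simp [abs_mul, Real.mul_rpow (abs_nonneg _) (abs_nonneg _)]

theorem ProbabilityTheory.IndepFun.integral_comp_le [IsFiniteMeasure μ] {β γ : Type*}
    [MeasurableSpace β] [MeasurableSpace γ] {U : Ω → β} {V : Ω → γ} (hUV : IndepFun U V μ)
    (hU : Measurable U) (hV : Measurable V) {F : β × γ → ℝ} (hF : Measurable F)
    (hFi : Integrable (fun ω => F (U ω, V ω)) μ) {G : β → ℝ} (hG : Measurable G)
    (hGi : Integrable (fun ω => G (U ω)) μ) (hle : ∀ u, ∫ ω, F (u, V ω) ∂μ ≤ G u) :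
    ∫ ω, F (U ω, V ω) ∂μ ≤ ∫ ω, G (U ω) ∂μ := by
  have hUV' := hU.prodMk hV
  have hmap := (indepFun_iff_map_prod_eq_prod_map_map hU.aemeasurable hV.aemeasurable).mp hUV
  have hFi' : Integrable F ((μ.map U).prod (μ.map V)) := by
    rwa [← hmap, integrable_map_measure hF.aestronglyMeasurable hUV'.aemeasurable]
  have hGi' : Integrable G (μ.map U) := by
    rwa [integrable_map_measure hG.aestronglyMeasurable hU.aemeasurable]
  calc ∫ ω, F (U ω, V ω) ∂μ = ∫ u, ∫ v, F (u, v) ∂(μ.map V) ∂(μ.map U) := by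
        rw [← integral_prod F hFi', ← hmap,
          integral_map hUV'.aemeasurable hF.aestronglyMeasurable]
    _ ≤ ∫ u, G u ∂(μ.map U) := by
        refine integral_mono hFi'.integral_prod_left hGi' fun u => ?_
        have hFu : Measurable fun v => F (u, v) := hF.comp measurable_prodMk_left
        rw [integral_map hV.aemeasurable hFu.aestronglyMeasurable]
        exact hle u
    _ = ∫ ω, G (U ω) ∂μ := integral_map hU.aemeasurable hG.aestronglyMeasurable

variable [IsProbabilityMeasure μ]

/-- Lyapunov's inequality. -/
lemma integral_abs_rpow_le_rpow {f : Ω → ℝ} (hf : Measurable f) {p q : ℝ} (hp : 0 ≤ p)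
    (hpq : p ≤ q) (hq : 0 < q) (hfq : Integrable (fun ω => |f ω| ^ q) μ) :
    ∫ ω, |f ω| ^ p ∂μ ≤ (∫ ω, |f ω| ^ q ∂μ) ^ (p / q) := by
  have hpow : ∀ ω, |f ω| ^ p = (|f ω| ^ q) ^ (p / q) := fun ω => by
    rw [← Real.rpow_mul (abs_nonneg _), mul_div_cancel₀ _ hq.ne']
  simp_rw [hpow]
  refine (Real.concaveOn_rpow (div_nonneg hp hq.le) ((div_le_one hq).mpr hpq)).le_map_integral
    (Real.continuous_rpow_const (div_nonneg hp hq.le)).continuousOn isClosed_Ici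
    (ae_of_all _ fun ω => Set.mem_Ici.mpr (by positivity)) hfq ?_
  simp_rw [Function.comp_def, ← hpow]
  exact integrable_abs_rpow_of_le hf hp hpq hfq

lemma one_le_integral_abs_rpow {X : Ω → ℝ} (hX : Measurable X) (hvar : ∫ ω, X ω ^ 2 ∂μ = 1)
    {r : ℝ} (hr : 2 ≤ r) (hXr : Integrable (fun ω => |X ω| ^ r) μ) :
    1 ≤ ∫ ω, |X ω| ^ r ∂μ := by
  have h := integral_abs_rpow_le_rpow hX zero_le_two hr (by linarith) hXr
  simp_rw [Real.rpow_two, sq_abs, hvar] at h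
  by_contra! hlt
  exact (Real.rpow_lt_one (integral_nonneg fun ω => by positivity) hlt (by positivity)).not_ge h

noncomputable def mzConst (r : ℝ) : ℝ := (2 * taylorConst r) ^ (r / 2)

lemma integral_abs_add_rpow_le {r : ℝ} (hr : 2 ≤ r) {S Y : Ω → ℝ} (hS : Measurable S)
    (hY : Measurable Y) (hSY : IndepFun S Y μ) (hSr : Integrable (fun ω => |S ω| ^ r) μ)
    (hYr : Integrable (fun ω => |Y ω| ^ r) μ) (hYmean : ∫ ω, Y ω ∂μ = 0) :
    ∫ ω, |S ω + Y ω| ^ r ∂μ ≤ ∫ ω, |S ω| ^ r ∂μ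
      + taylorConst r * ((∫ ω, |S ω| ^ (r - 2) ∂μ) * ∫ ω, Y ω ^ 2 ∂μ + ∫ ω, |Y ω| ^ r ∂μ) := by
  have hY1 : Integrable Y μ := by
    refine (integrable_norm_iff hY.aestronglyMeasurable).mp ?_
    simpa using integrable_abs_rpow_of_le hY zero_le_one (by linarith) hYr
  have hY2 : Integrable (fun ω => Y ω ^ 2) μ := by
    simpa using integrable_abs_rpow_of_le hY zero_le_two hr hYr
  have hS2 : Integrable (fun ω => |S ω| ^ (r - 2)) μ :=
    integrable_abs_rpow_of_le hS (by linarith) (by linarith) hSr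
  have hS1 : Integrable (fun ω => |S ω| ^ (r - 2) * S ω) μ := by
    refine (integrable_abs_rpow_of_le hS (p := r - 1) (by linarith) (by linarith) hSr).mono'
      (by fun_prop) (ae_of_all _ fun ω => le_of_eq ?_)
    rw [norm_mul, Real.norm_of_nonneg (by positivity), Real.norm_eq_abs,
      ← Real.rpow_add_one' (abs_nonneg _) (by linarith)]
    ring_nf
  have hSY1 : IndepFun (fun ω => |S ω| ^ (r - 2) * S ω) Y μ :=
    hSY.comp (φ := fun s => |s| ^ (r - 2) * s) (by fun_prop) measurable_id
  have hSY2 : IndepFun (fun ω => |S ω| ^ (r - 2)) (fun ω => Y ω ^ 2) μ :=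
    hSY.comp (φ := fun s => |s| ^ (r - 2)) (ψ := fun y => y ^ 2) (by fun_prop) (by fun_prop)
  have hP1 : Integrable (fun ω => |S ω| ^ (r - 2) * S ω * Y ω) μ := hSY1.integrable_mul hS1 hY1
  have hP2 : Integrable (fun ω => |S ω| ^ (r - 2) * Y ω ^ 2) μ := hSY2.integrable_mul hS2 hY2
  have hE1 : ∫ ω, |S ω| ^ (r - 2) * S ω * Y ω ∂μ = 0 := by
    rw [hSY1.integral_fun_mul_eq_mul_integral hS1.1 hY1.1, hYmean, mul_zero]
  have hE2 : ∫ ω, |S ω| ^ (r - 2) * Y ω ^ 2 ∂μ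
      = (∫ ω, |S ω| ^ (r - 2) ∂μ) * ∫ ω, Y ω ^ 2 ∂μ :=
    hSY2.integral_fun_mul_eq_mul_integral hS2.1 hY2.1
  have hA : Integrable (fun ω => |S ω| ^ r + r * (|S ω| ^ (r - 2) * S ω * Y ω)) μ :=
    hSr.add (hP1.const_mul r)
  have hB : Integrable (fun ω => taylorConst r * (|S ω| ^ (r - 2) * Y ω ^ 2 + |Y ω| ^ r)) μ :=
    (hP2.add hYr).const_mul _
  calc ∫ ω, |S ω + Y ω| ^ r ∂μ
      ≤ ∫ ω, (|S ω| ^ r + r * (|S ω| ^ (r - 2) * S ω * Y ω)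
          + taylorConst r * (|S ω| ^ (r - 2) * Y ω ^ 2 + |Y ω| ^ r)) ∂μ :=
        integral_mono_of_nonneg (ae_of_all _ fun ω => by positivity) (hA.add hB)
          (ae_of_all _ fun ω => abs_add_rpow_le (by linarith) (S ω) (Y ω))
    _ = _ := by
      rw [integral_add hA hB, integral_add hSr (hP1.const_mul r), integral_const_mul,
        integral_const_mul, integral_add hP2 hYr, hE1, hE2]
      ring

variable {r m : ℝ}

theorem integral_abs_weighted_sum_rpow_le {ι : Type*} (s : Finset ι) {X : ι → Ω → ℝ}
    (hX : ∀ i, Measurable (X i)) (hindep : iIndepFun X μ) (hmean : ∀ i, ∫ ω, X i ω ∂μ = 0)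
    (hvar : ∀ i, ∫ ω, X i ω ^ 2 ∂μ = 1) (hr : 2 ≤ r)
    (hXr : ∀ i, Integrable (fun ω => |X i ω| ^ r) μ) (hm : ∀ i, ∫ ω, |X i ω| ^ r ∂μ ≤ m)
    (t : ι → ℝ) :
    ∫ ω, |∑ i ∈ s, t i * X i ω| ^ r ∂μ ≤ mzConst r * m * (∑ i ∈ s, t i ^ 2) ^ (r / 2) := by
  classical
  have hc := one_le_taylorConst (by linarith : 1 ≤ r)
  induction s using Finset.induction_on with
  | empty => simp [Real.zero_rpow (by linarith : r ≠ 0), Real.zero_rpow (by linarith : r / 2 ≠ 0)]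
  | insert i s hi ih =>
    set S := fun ω => ∑ j ∈ s, t j * X j ω
    have hS : Measurable S := Finset.measurable_fun_sum s fun j _ => (hX j).const_mul (t j)
    have hSr : Integrable (fun ω => |S ω| ^ r) μ :=
      integrable_abs_sum_rpow s (fun j _ => (hX j).const_mul (t j)) (by linarith)
        fun j _ => integrable_abs_mul_rpow (t j) (hXr j)
    have hSY : IndepFun S (fun ω => t i * X i ω) μ := by
      have := (hindep.comp (fun j x => t j * x) fun j => measurable_const_mul (t j))
        |>.indepFun_finsetSum_of_notMem (fun j => (hX j).const_mul (t j)) hi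
      convert this using 1 <;> ext ω <;> simp [S, Finset.sum_apply]
    have hY2 : ∫ ω, (t i * X i ω) ^ 2 ∂μ = t i ^ 2 := by
      simp_rw [mul_pow, integral_const_mul, hvar, mul_one]
    have hYr : ∫ ω, |t i * X i ω| ^ r ∂μ ≤ m * (t i ^ 2) ^ (r / 2) := by
      simp_rw [abs_mul, Real.mul_rpow (abs_nonneg _) (abs_nonneg _), integral_const_mul,
        sq_rpow_div_two, mul_comm m]
      exact mul_le_mul_of_nonneg_left (hm i) (by positivity)
    have hlyap : ∫ ω, |S ω| ^ (r - 2) ∂μ ≤ (∫ ω, |S ω| ^ r ∂μ) ^ ((r - 2) / r) :=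
      integral_abs_rpow_le_rpow hS (by linarith) (by linarith) (by linarith) hSr
    have hYmean : ∫ ω, t i * X i ω ∂μ = 0 := by rw [integral_const_mul, hmean, mul_zero]
    have hstep := integral_abs_add_rpow_le hr hS ((hX i).const_mul (t i)) hSY hSr
      (integrable_abs_mul_rpow (t i) (hXr i)) hYmean
    have hrec := add_mul_le_rpow_mul_add_rpow hr (by linarith)
      ((one_le_integral_abs_rpow (hX i) (hvar i) hr (hXr i)).trans (hm i))
      (Finset.sum_nonneg fun j _ => sq_nonneg (t j)) (sq_nonneg (t i))
      (integral_nonneg fun ω => by positivity) ih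
    simp_rw [Finset.sum_insert hi, add_comm (t i * X i _), add_comm (t i ^ 2)]
    refine hstep.trans (le_trans ?_ hrec)
    rw [hY2]
    gcongr

theorem integral_abs_sum_mul_rpow_le {ι : Type*} (s : Finset ι) {T X : ι → Ω → ℝ}
    (hT : ∀ i, Measurable (T i)) (hX : ∀ i, Measurable (X i))
    (hTX : IndepFun (fun ω i => T i ω) (fun ω i => X i ω) μ) (hindep : iIndepFun X μ)
    (hmean : ∀ i, ∫ ω, X i ω ∂μ = 0) (hvar : ∀ i, ∫ ω, X i ω ^ 2 ∂μ = 1) (hr : 2 ≤ r)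
    (hXr : ∀ i, Integrable (fun ω => |X i ω| ^ r) μ) (hm : ∀ i, ∫ ω, |X i ω| ^ r ∂μ ≤ m)
    (hTr : ∀ i ∈ s, Integrable (fun ω => |T i ω| ^ r) μ) {B : ℝ}
    (hB : ∀ i ∈ s, ∫ ω, |T i ω| ^ r ∂μ ≤ B) :
    ∫ ω, |∑ i ∈ s, T i ω * X i ω| ^ r ∂μ ≤ mzConst r * m * (#s : ℝ) ^ (r / 2) * B := by
  rcases s.eq_empty_or_nonempty with rfl | ⟨i₀, hi₀⟩
  · simp [Real.zero_rpow (by linarith : r ≠ 0), Real.zero_rpow (by linarith : r / 2 ≠ 0)]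
  have hKm : 0 ≤ mzConst r * m :=
    mul_nonneg (Real.rpow_nonneg (by linarith [one_le_taylorConst (by linarith : 1 ≤ r)]) _)
      ((integral_nonneg fun ω => by positivity).trans (hm i₀))
  set C := mzConst r * m * (#s : ℝ) ^ (r / 2 - 1)
  have hC : 0 ≤ C := by positivity
  have hinner : ∀ u : ι → ℝ, ∫ ω, |∑ i ∈ s, u i * X i ω| ^ r ∂μ ≤ C * ∑ i ∈ s, |u i| ^ r := by
    intro u
    have hpm := Real.rpow_sum_le_const_mul_sum_rpow s (fun i => u i ^ 2) (by linarith : 1 ≤ r / 2)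
    simp only [abs_sq, sq_rpow_div_two] at hpm
    calc ∫ ω, |∑ i ∈ s, u i * X i ω| ^ r ∂μ ≤ mzConst r * m * (∑ i ∈ s, u i ^ 2) ^ (r / 2) :=
          integral_abs_weighted_sum_rpow_le s hX hindep hmean hvar hr hXr hm u
      _ ≤ mzConst r * m * ((#s : ℝ) ^ (r / 2 - 1) * ∑ i ∈ s, |u i| ^ r) := by gcongr
      _ = C * ∑ i ∈ s, |u i| ^ r := by ring
  calc ∫ ω, |∑ i ∈ s, T i ω * X i ω| ^ r ∂μ ≤ ∫ ω, C * ∑ i ∈ s, |T i ω| ^ r ∂μ :=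
        hTX.integral_comp_le (F := fun z => |∑ i ∈ s, z.1 i * z.2 i| ^ r)
          (G := fun u => C * ∑ i ∈ s, |u i| ^ r) (measurable_pi_lambda _ hT)
          (measurable_pi_lambda _ hX) (by fun_prop)
          (integrable_abs_sum_mul_rpow s hT hX hTX (by linarith) hTr hXr) (by fun_prop)
          ((integrable_finsetSum s hTr).const_mul C) hinner
    _ = C * ∑ i ∈ s, ∫ ω, |T i ω| ^ r ∂μ := by rw [integral_const_mul, integral_finsetSum s hTr]
    _ ≤ C * (#s * B) := by
        gcongr
        simpa using Finset.sum_le_sum hB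
    _ = mzConst r * m * (#s : ℝ) ^ (r / 2) * B := by
        rw [← rpow_sub_one_mul_self (Nat.cast_nonneg _) (by linarith : r / 2 ≠ 0)]
        ring

end Moments

section MatrixProduct

variable {Ω : Type*} (n : ℕ → ℕ) (A : ℕ → ℕ → ℕ → Ω → ℝ)

noncomputable def colSum (p j : ℕ) (ω : Ω) : ℝ :=
  ∑ i ∈ range (n 0), matProd n (fun q a b => A q a b ω) p i j

lemma colSum_succ (p j : ℕ) (ω : Ω) :
    colSum n A (p + 1) j ω = ∑ l ∈ range (n (p + 1)), colSum n A p l ω * A (p + 1) l j ω := by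
  simp only [colSum, matProd, Finset.sum_mul]
  exact Finset.sum_comm

variable {n A}

lemma measurable_matProd {γ : Type*} {m : MeasurableSpace γ} {F : ℕ → ℕ → ℕ → γ → ℝ} {p : ℕ}
    (hF : ∀ q ≤ p, ∀ a b, Measurable[m] (F q a b)) (i k : ℕ) :
    Measurable[m] fun v => matProd n (fun q a b => F q a b v) p i k := by
  induction p generalizing k with
  | zero => exact hF 0 le_rfl i k
  | succ p ih =>
    exact Finset.measurable_sum _ fun l _ =>
      (ih (fun q hq => hF q (by omega)) l).mul (hF (p + 1) le_rfl l k)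

lemma measurable_colSum {m : MeasurableSpace Ω} {p : ℕ}
    (hA : ∀ q ≤ p, ∀ a b, Measurable[m] (A q a b)) (j : ℕ) : Measurable[m] (colSum n A p j) :=
  Finset.measurable_sum _ fun i _ => measurable_matProd hA i j

variable [MeasurableSpace Ω] {μ : Measure Ω}

lemma indepFun_colSum_nextLayer (hA : ∀ q a b, Measurable (A q a b))
    (hindep : iIndepFun (fun t : ℕ × ℕ × ℕ => A t.1 t.2.1 t.2.2) μ) (p j : ℕ) :
    IndepFun (fun ω l => colSum n A p l ω) (fun ω l => A (p + 1) l j ω) μ := by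
  -- the entries of layers `≤ p` and those of layer `p + 1` generate independent σ-algebras
  let mA (t : ℕ × ℕ × ℕ) : MeasurableSpace Ω := .comap (A t.1 t.2.1 t.2.2) inferInstance
  have hmeas : ∀ (U : Set (ℕ × ℕ × ℕ)) t, t ∈ U → Measurable[⨆ t ∈ U, mA t] (A t.1 t.2.1 t.2.2) :=
    fun U t ht => measurable_iff_comap_le.mpr (le_iSup₂ (f := fun t (_ : t ∈ U) => mA t) t ht)
  have h := indep_iSup_of_disjoint (m := mA) (fun t => (hA t.1 t.2.1 t.2.2).comap_le)
    ((iIndepFun_iff_iIndep _ _ _).mp hindep) (S := {t | t.1 ≤ p}) (T := {t | t.1 = p + 1})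
    (Set.disjoint_left.mpr fun t h1 h2 => by simp only [Set.mem_ofPred_eq] at h1 h2; omega)
  rw [IndepFun_iff_Indep]
  refine indep_of_indep_of_le_right (indep_of_indep_of_le_left h ?_) ?_
  · exact (@measurable_pi_lambda _ _ _ (⨆ t ∈ {t : ℕ × ℕ × ℕ | t.1 ≤ p}, mA t) _ _ fun l =>
      measurable_colSum (fun q hq a b => hmeas _ (q, a, b) hq) l).comap_le
  · exact (@measurable_pi_lambda _ _ _ (⨆ t ∈ {t : ℕ × ℕ × ℕ | t.1 = p + 1}, mA t) _ _ fun l =>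
      hmeas _ (p + 1, l, j) rfl).comap_le

lemma integrable_abs_colSum_rpow (hA : ∀ q a b, Measurable (A q a b))
    (hindep : iIndepFun (fun t : ℕ × ℕ × ℕ => A t.1 t.2.1 t.2.2) μ) {r : ℝ} (hr : 1 ≤ r) {p : ℕ}
    (hint : ∀ q ≤ p, ∀ a b, Integrable (fun ω => |A q a b ω| ^ r) μ) (j : ℕ) :
    Integrable (fun ω => |colSum n A p j ω| ^ r) μ := by
  induction p generalizing j with
  | zero => exact integrable_abs_sum_rpow _ (fun i _ => hA 0 i j) hr fun i _ => hint 0 le_rfl i j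
  | succ p ih =>
    simp_rw [colSum_succ]
    exact integrable_abs_sum_mul_rpow _ (fun l => measurable_colSum (fun q _ => hA q) l)
      (fun l => hA (p + 1) l j) (indepFun_colSum_nextLayer hA hindep p j) hr
      (fun l _ => ih (fun q hq => hint q (by omega)) l) fun l => hint (p + 1) le_rfl l j

theorem integral_abs_colSum_rpow_le [IsProbabilityMeasure μ] (hA : ∀ q a b, Measurable (A q a b))
    (hindep : iIndepFun (fun t : ℕ × ℕ × ℕ => A t.1 t.2.1 t.2.2) μ) {r : ℝ} (hr : 2 ≤ r)
    {m : ℕ → ℝ} {p : ℕ} (hmean : ∀ q ≤ p, ∀ a b, ∫ ω, A q a b ω ∂μ = 0)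
    (hvar : ∀ q ≤ p, ∀ a b, ∫ ω, A q a b ω ^ 2 ∂μ = 1)
    (hint : ∀ q ≤ p, ∀ a b, Integrable (fun ω => |A q a b ω| ^ r) μ)
    (hm : ∀ q ≤ p, ∀ a b, ∫ ω, |A q a b ω| ^ r ∂μ ≤ m q) (j : ℕ) :
    ∫ ω, |colSum n A p j ω| ^ r ∂μ ≤
      mzConst r ^ (p + 1) * (∏ q ∈ range (p + 1), m q) *
        (∏ q ∈ range (p + 1), (n q : ℝ)) ^ (r / 2) := by
  have hrow : ∀ q j, iIndepFun (fun l => A q l j) μ := fun q j =>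
    hindep.precomp (g := fun l => (q, l, j)) fun a b hab => by simpa using hab
  induction p generalizing j with
  | zero =>
    have h := integral_abs_sum_mul_rpow_le (range (n 0)) (T := fun _ _ => 1)
      (fun _ => measurable_const) (fun i => hA 0 i j) (indepFun_const_left _ _) (hrow 0 j)
      (fun i => hmean 0 le_rfl i j) (fun i => hvar 0 le_rfl i j) hr (fun i => hint 0 le_rfl i j)
      (fun i => hm 0 le_rfl i j) (fun _ _ => by simp) (B := 1) (fun _ _ => by simp)
    simpa [colSum, matProd] using h
  | succ p ih =>
    simp_rw [colSum_succ]
    refine (integral_abs_sum_mul_rpow_le _ (fun l => measurable_colSum (fun q _ => hA q) l)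
      (fun l => hA (p + 1) l j) (indepFun_colSum_nextLayer hA hindep p j) (hrow (p + 1) j)
      (fun l => hmean (p + 1) le_rfl l j) (fun l => hvar (p + 1) le_rfl l j) hr
      (fun l => hint (p + 1) le_rfl l j) (fun l => hm (p + 1) le_rfl l j)
      (fun l _ => integrable_abs_colSum_rpow hA hindep (by linarith) (p := p)
        (fun q hq => hint q (by omega)) l)
      (fun l _ => ih (fun q hq => hmean q (by omega)) (fun q hq => hvar q (by omega))
        (fun q hq => hint q (by omega)) (fun q hq => hm q (by omega)) l)).trans_eq ?_
    rw [card_range, prod_range_succ _ (p + 1), prod_range_succ _ (p + 1),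
      Real.mul_rpow (by positivity) (by positivity), pow_succ]
    ring

end MatrixProduct

/-- moment estimate for column sums: for `α ≥ 1` and `p ≥ 1` there is a constant
`C` (depending only on `α` and `p`) such that for a product `P = A⁽¹⁾ ⋯ A⁽ᵖ⁾` of independent
random matrices with i.i.d. centered unit-variance entries with finite moment of order `2α`,
for every column index `j < n_p`,
`E[|∑_{i<n₀} P_{ij}|^{2α}] ≤ C E[|A⁽¹⁾₁₁|^{2α}] ⋯ E[|A⁽ᵖ⁾₁₁|^{2α}] (n₀ n₁ ⋯ n_{p−1})^α`. -/
theorem moment_estimate_column_sums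
    (α : ℝ) (hα : 1 ≤ α) (p : ℕ) (hp : 1 ≤ p) :
    ∃ C : ℝ, ∀ (Ω : Type) [MeasureSpace Ω] [IsProbabilityMeasure (ℙ : Measure Ω)],
    ∀ n : ℕ → ℕ, ∀ A : ℕ → ℕ → ℕ → Ω → ℝ,
      (∀ q i j, Measurable (A q i j)) →
      iIndepFun (fun t : ℕ × ℕ × ℕ => A t.1 t.2.1 t.2.2) ℙ →
      (∀ q i j, IdentDistrib (A q i j) (A q 0 0) ℙ ℙ) →
      (∀ q, ∫ ω, A q 0 0 ω ∂ℙ = 0) →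
      (∀ q, ∫ ω, (A q 0 0 ω) ^ 2 ∂ℙ = 1) →
      (∀ q < p, Integrable (fun ω => |A q 0 0 ω| ^ (2 * α)) ℙ) →
      ∀ j < n p,
        (∫ ω, |∑ i ∈ Finset.range (n 0),
            matProd n (fun q i j => A q i j ω) (p - 1) i j| ^ (2 * α) ∂ℙ) ≤
          C * (∏ q ∈ Finset.range p, ∫ ω, |A q 0 0 ω| ^ (2 * α) ∂ℙ) *
            (∏ q ∈ Finset.range p, (n q : ℝ)) ^ α := by
  refine ⟨mzConst (2 * α) ^ p, fun Ω _ _ n A hA hindep hident hmean hvar hint j _ => ?_⟩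
  obtain ⟨p, rfl⟩ : ∃ p', p = p' + 1 := ⟨p - 1, by omega⟩
  have habs : ∀ q a b, IdentDistrib (fun ω => |A q a b ω| ^ (2 * α))
      (fun ω => |A q 0 0 ω| ^ (2 * α)) ℙ ℙ := fun q a b =>
    (hident q a b).comp (u := fun x => |x| ^ (2 * α)) (by fun_prop)
  have h := integral_abs_colSum_rpow_le (n := n) (p := p) (m := fun q => ∫ ω, |A q 0 0 ω| ^ (2 * α))
    hA hindep (by linarith : 2 ≤ 2 * α)
    (fun q _ a b => (hident q a b).integral_eq.trans (hmean q))
    (fun q _ a b =>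
      ((hident q a b).comp (u := fun x => x ^ 2) (by fun_prop)).integral_eq.trans (hvar q))
    (fun q hq a b => (habs q a b).integrable_iff.mpr (hint q (by omega)))
    (fun q _ a b => (habs q a b).integral_eq.le) j
  rw [mul_div_cancel_left₀ α two_ne_zero] at h
  rw [Nat.add_sub_cancel]
  exact h
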